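/- Let q ≠ 0 and r be real numbers. For every nonnegative integer n, ĉ_n^q(−r) = ∑_{k=0}^n (−1)^k w(n,k)/(k+1). -/

import Mathlib

/-- The falling factorial `(x)_k = x(x-1)⋯(x-k+1)`. -/
noncomputable def fallFac (x : ℝ) (k : ℕ) : ℝ := ∏ i ∈ Finset.range k, (x - i)

/-- The generalized falling factorial `(x|q)_k = x(x-q)⋯(x-(k-1)q)`. -/
noncomputable def genFallFac (q x : ℝ) (k : ℕ) : ℝ := ∏ i ∈ Finset.range k, (x - i * q)

/-- The Cauchy polynomials with a `q` parameter of the second kind: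
`ĉ_n^q(z) = ∫_0^1 (−x + z | q)_n dx`. -/
noncomputable def cauchySecond (q z : ℝ) (n : ℕ) : ℝ := ∫ x in (0:ℝ)..1, genFallFac q (-x + z) n

/-!
Since `(z|q)_n = q^n (z/q)_n`, putting `x = z/q` in the defining identity of the Whitney numbers
expands `(z|q)_n` in powers of `z + r`. At `z = -x - r` the integrand of `ĉ_n^q(-r)` becomes the
polynomial `∑ w(n,k) (-x)^k`, and `∫_0^1 (-x)^k dx = (-1)^k/(k+1)`.
-/

open Finset

theorem genFallFac_eq_pow_mul_fallFac {q : ℝ} (hq : q ≠ 0) (z : ℝ) (n : ℕ) :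
    genFallFac q z n = q ^ n * fallFac (z / q) n := by
  rw [genFallFac, fallFac, ← card_range n, ← prod_const, card_range, ← prod_mul_distrib]
  exact prod_congr rfl fun i _ => by field_simp

theorem integral_neg_pow_unitInterval (k : ℕ) :
    ∫ x in (0 : ℝ)..1, (-x) ^ k = (-1 : ℝ) ^ k / (k + 1) := by
  rw [funext fun x : ℝ => neg_pow x k, intervalIntegral.integral_const_mul, integral_pow]
  simp [div_eq_mul_inv]

theorem integral_sum_mul_neg_pow (s : Finset ℕ) (c : ℕ → ℝ) :
    ∫ x in (0 : ℝ)..1, ∑ k ∈ s, c k * (-x) ^ k = ∑ k ∈ s, (-1) ^ k * c k / (k + 1) := by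
  rw [intervalIntegral.integral_finsetSum fun k _ =>
    (by fun_prop : Continuous _).intervalIntegrable _ _]
  refine sum_congr rfl fun k _ => ?_
  rw [intervalIntegral.integral_const_mul, integral_neg_pow_unitInterval]
  ring

theorem cauchySecond_eq_sum_whitneyFirst_general (q r : ℝ) (hq : q ≠ 0)
    (w : ℕ → ℕ → ℝ)
    (hw : ∀ n : ℕ, ∀ x : ℝ, q ^ n * fallFac x n =
      ∑ k ∈ Finset.range (n + 1), w n k * (q * x + r) ^ k)
    (n : ℕ) :
    cauchySecond q (-r) n =
      ∑ k ∈ Finset.range (n + 1), (-1 : ℝ) ^ k * w n k / ((k : ℝ) + 1) := by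
  have expand : ∀ x : ℝ, genFallFac q (-x + -r) n = ∑ k ∈ range (n + 1), w n k * (-x) ^ k := by
    intro x
    rw [genFallFac_eq_pow_mul_fallFac hq, hw, mul_div_cancel₀ _ hq, neg_add_cancel_right]
  rw [cauchySecond, intervalIntegral.integral_congr fun x _ => expand x]
  exact integral_sum_mul_neg_pow _ _

/-- `ĉ_n^q(−r) = ∑_{k=0}^n (−1)^k w(n,k)/(k+1)`. -/
theorem cauchySecond_eq_sum_whitneyFirst (q r : ℝ) (hq : q ≠ 0)
    (w : ℕ → ℕ → ℝ)
    (hw0 : ∀ n k, n < k → w n k = 0)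
    (hw : ∀ n : ℕ, ∀ x : ℝ, q ^ n * fallFac x n =
      ∑ k ∈ Finset.range (n + 1), w n k * (q * x + r) ^ k)
    (n : ℕ) :
    cauchySecond q (-r) n =
      ∑ k ∈ Finset.range (n + 1), (-1 : ℝ) ^ k * w n k / ((k : ℝ) + 1) :=
  cauchySecond_eq_sum_whitneyFirst_general q r hq w hw n
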